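/- arXiv:1007.1101 — 3 statements merged into one kernel-verified Lean document; each statement's English description precedes it below -/
import Mathlib

section
/- For every real β>1 there exists a unique m∈(0,1) with m=tanh(β·m); moreover for 0<β≤1 the only solution of m=tanh(β·m) in [0,1] is m=0. -/
open Real Set Filter Topology

/-!
`tanh` is strictly concave on `[0, ∞)` with `tanh' 0 = 1`, so its secant slope `tanh x / x`
through the origin decreases strictly on `(0, ∞)`, from the limit `1` at `0⁺`. For `m > 0` the
equation `m = tanh (β m)` says that this slope equals `β⁻¹` at `x = β m`. If `β ≤ 1` this is
impossible since the slope stays below `1`; if `β > 1` the intermediate value theorem gives a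
solution with `x < β` (where the slope is `tanh β / β < β⁻¹`), and strict monotonicity makes it
unique.
-/

theorem StrictConcaveOn.strictAntiOn_slope {𝕜 : Type*} [Field 𝕜] [LinearOrder 𝕜]
    [IsStrictOrderedRing 𝕜] {s : Set 𝕜} {f : 𝕜 → 𝕜} {a : 𝕜}
    (hf : StrictConcaveOn 𝕜 s f) (ha : a ∈ s) : StrictAntiOn (slope f a) (s \ {a}) :=
  fun _ hx _ hy hxy ↦ by
    simpa only [slope_def_field] using hf.secant_strict_mono ha hx.1 hy.1 hx.2 hy.2 hxy

namespace Real

theorem hasDerivAt_tanh (x : ℝ) : HasDerivAt tanh (cosh x ^ 2)⁻¹ x := by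
  have h := (hasDerivAt_sinh x).div (hasDerivAt_cosh x) (cosh_pos x).ne'
  rwa [← sq, ← sq, cosh_sq_sub_sinh_sq, one_div,
    ← show tanh = sinh / cosh from funext tanh_eq_sinh_div_cosh] at h

theorem continuous_tanh : Continuous tanh :=
  continuous_iff_continuousAt.2 fun x ↦ (hasDerivAt_tanh x).continuousAt

theorem strictConcaveOn_tanh : StrictConcaveOn ℝ (Ici 0) tanh := by
  refine StrictAntiOn.strictConcaveOn_of_deriv (convex_Ici 0) continuous_tanh.continuousOn ?_
  rw [interior_Ici, funext fun x ↦ (hasDerivAt_tanh x).deriv]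
  intro x hx y _ hxy
  have hcosh : cosh x < cosh y := cosh_strictMonoOn hx.out.le (hx.out.trans hxy).le hxy
  show (cosh y ^ 2)⁻¹ < (cosh x ^ 2)⁻¹
  gcongr

theorem tendsto_slope_tanh_zero : Tendsto (slope tanh 0) (𝓝[>] 0) (𝓝 1) := by
  have h := hasDerivAt_iff_tendsto_slope.1 (hasDerivAt_tanh 0)
  rw [cosh_zero, one_pow, inv_one] at h
  exact h.mono_left (nhdsGT_le_nhdsNE 0)

theorem slope_tanh_zero_lt_one {x : ℝ} (hx : 0 < x) : slope tanh 0 x < 1 := by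
  simpa using
    strictConcaveOn_tanh.slope_lt_of_hasDerivAt self_mem_Ici hx.le hx (hasDerivAt_tanh 0)

theorem slope_tanh_zero (x : ℝ) : slope tanh 0 x = tanh x / x := by
  simp [slope_def_field]

theorem tanh_lt_self {x : ℝ} (hx : 0 < x) : tanh x < x := by
  have := slope_tanh_zero_lt_one hx
  rwa [slope_tanh_zero, div_lt_one hx] at this

theorem strictAntiOn_slope_tanh_zero : StrictAntiOn (slope tanh 0) (Ioi 0) :=
  (strictConcaveOn_tanh.strictAntiOn_slope self_mem_Ici).mono fun _ hx ↦
    ⟨mem_Ici.2 hx.out.le, hx.out.ne'⟩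

end Real

theorem eq_tanh_mul_iff_slope_tanh {β m : ℝ} (hβ : 0 < β) (hm : 0 < m) :
    m = tanh (β * m) ↔ slope tanh 0 (β * m) = β⁻¹ := by
  rw [slope_tanh_zero, div_eq_iff (by positivity), eq_comm]
  field_simp

theorem exists_mem_Ioo_eq_tanh_mul {β : ℝ} (hβ : 1 < β) : ∃ m ∈ Ioo 0 1, m = tanh (β * m) := by
  have hβ0 : 0 < β := one_pos.trans hβ
  obtain ⟨a, ha, haβ⟩ : ∃ a, β⁻¹ < slope tanh 0 a ∧ a ∈ Ioo 0 β :=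
    ((tendsto_slope_tanh_zero.eventually (lt_mem_nhds (inv_lt_one_of_one_lt₀ hβ))).and
      (Ioo_mem_nhdsGT hβ0)).exists
  have hβa : slope tanh 0 β < β⁻¹ := by
    rw [slope_tanh_zero, div_lt_iff₀ hβ0, inv_mul_cancel₀ hβ0.ne']
    exact tanh_lt_one β
  have hcont : ContinuousOn (slope tanh 0) (Icc a β) := by
    rw [slope_fun_def_field]
    exact (continuous_tanh.continuousOn.sub continuousOn_const).div
      (continuousOn_id.sub continuousOn_const) fun x hx ↦ by simpa using (haβ.1.trans_le hx.1).ne'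
  obtain ⟨x, hx, hxβ⟩ := intermediate_value_Ioo' haβ.2.le hcont ⟨hβa, ha⟩
  have hx0 : 0 < x := haβ.1.trans hx.1
  refine ⟨x / β, ⟨by positivity, (div_lt_one hβ0).2 hx.2⟩, ?_⟩
  rwa [eq_tanh_mul_iff_slope_tanh hβ0 (by positivity), mul_div_cancel₀ x hβ0.ne']

theorem eq_zero_of_eq_tanh_mul {β m : ℝ} (hβ : 0 < β) (hβ1 : β ≤ 1) (hm : 0 ≤ m)
    (h : m = tanh (β * m)) : m = 0 := by
  by_contra hne
  have hm0 : 0 < m := hm.lt_of_ne' hne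
  have := tanh_lt_self (mul_pos hβ hm0)
  nlinarith

theorem eq_of_eq_tanh_mul {β m m' : ℝ} (hβ : 0 < β) (hm : 0 < m) (hm' : 0 < m')
    (h : m = tanh (β * m)) (h' : m' = tanh (β * m')) : m = m' := by
  rw [eq_tanh_mul_iff_slope_tanh hβ hm] at h
  rw [eq_tanh_mul_iff_slope_tanh hβ hm'] at h'
  exact mul_left_cancel₀ hβ.ne' <|
    strictAntiOn_slope_tanh_zero.injOn (mul_pos hβ hm) (mul_pos hβ hm') (h.trans h'.symm)

/-- **Mean-field equation.** For every real `β > 1` there exists a unique `m ∈ (0,1)` with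
`m = tanh (β * m)`; moreover for `0 < β ≤ 1` the only solution of `m = tanh (β * m)`
in `[0,1]` is `m = 0`. -/
theorem mean_field_equation :
    (∀ β : ℝ, 1 < β → ∃! m : ℝ, m ∈ Set.Ioo (0 : ℝ) 1 ∧ m = Real.tanh (β * m)) ∧
    (∀ β : ℝ, 0 < β → β ≤ 1 →
      ∀ m : ℝ, m ∈ Set.Icc (0 : ℝ) 1 → m = Real.tanh (β * m) → m = 0) := by
  refine ⟨fun β hβ ↦ ?_, fun β hβ hβ1 m hm h ↦ eq_zero_of_eq_tanh_mul hβ hβ1 hm.1 h⟩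
  obtain ⟨m, hm, h⟩ := exists_mem_Ioo_eq_tanh_mul hβ
  exact ⟨m, ⟨hm, h⟩, fun m' ⟨hm', h'⟩ ↦ eq_of_eq_tanh_mul (one_pos.trans hβ) hm'.1 hm.1 h' h⟩
end

section
/- The map β ↦ β·m_β² is continuous and strictly increasing on (1,∞), tends to 0 as β↓1 and to +∞ as β→∞. Consequently, for every b>0 there exists a unique β̃(b)∈(1,∞) such that β̃(b)·m_{β̃(b)}² = b. -/
/-!
Applying `artanh`, the equation `m_β = tanh (β m_β)` reads `artanh m_β / m_β = β`. By the Taylor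
series `artanh x / x = ∑ x ^ (2k) / (2k + 1)`, the map `x ↦ artanh x / x` is a strictly
increasing bijection from `(0, 1)` onto `(1, ∞)`, and `β ↦ m_β` is its inverse: a strictly
increasing map of `(1, ∞)` onto `(0, 1)`, hence continuous, with `m_β → 0` as `β ↓ 1`. So
`β m_β²` is continuous, strictly increasing, tends to `0` at `1⁺` and is at least `β m_2²` for
`β ≥ 2`; the intermediate value theorem makes it a bijection onto `(0, ∞)`.
-/

open Filter Topology Set Real

namespace Real

theorem hasSum_artanh {x : ℝ} (hx : |x| < 1) :
    HasSum (fun k : ℕ => x ^ (2 * k + 1) / (2 * k + 1)) (artanh x) := by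
  obtain ⟨hx₁, hx₂⟩ := abs_lt.1 hx
  rw [artanh_eq_half_log ⟨hx₁.le, hx₂.le⟩, log_div (by linarith) (by linarith)]
  convert (hasSum_log_sub_log_of_abs_lt_one hx).mul_left (1 / 2) using 1
  · rfl
  ext k
  ring

theorem hasSum_artanh_div {x : ℝ} (hx : |x| < 1) (hx₀ : x ≠ 0) :
    HasSum (fun k : ℕ => x ^ (2 * k) / (2 * k + 1)) (artanh x / x) := by
  convert (hasSum_artanh hx).div_const x using 1
  · rfl
  ext k
  rw [pow_succ]
  field_simp

theorem strictMonoOn_artanh_div : StrictMonoOn (fun x => artanh x / x) (Ioo 0 1) := by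
  intro x ⟨hx₀, hx₁⟩ y ⟨_, hy₁⟩ hxy
  refine hasSum_lt (f := fun k : ℕ => x ^ (2 * k) / (2 * k + 1)) (i := 1) (fun k => ?_) ?_
    (hasSum_artanh_div (abs_lt.2 ⟨by linarith, hx₁⟩) hx₀.ne')
    (hasSum_artanh_div (abs_lt.2 ⟨by linarith, hy₁⟩) (by linarith))
  · dsimp only
    gcongr
  · norm_num
    gcongr

theorem one_lt_artanh_div {x : ℝ} (hx : x ∈ Ioo 0 1) : 1 < artanh x / x := by
  obtain ⟨hx₀, hx₁⟩ := hx
  refine hasSum_lt (f := fun k : ℕ => if k = 0 then 1 else 0) (i := 1) (fun k => ?_) ?_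
    (hasSum_ite_eq 0 1) (hasSum_artanh_div (abs_lt.2 ⟨by linarith, hx₁⟩) hx₀.ne')
  · dsimp only
    split_ifs with hk
    · simp [hk]
    · positivity
  · norm_num
    positivity

end Real

def IsMagnetization (m : ℝ → ℝ) : Prop :=
  ∀ β : ℝ, 1 < β → m β ∈ Ioo (0 : ℝ) 1 ∧ m β = tanh (β * m β)

namespace IsMagnetization

variable {m : ℝ → ℝ}

theorem artanh_div_eq (hm : IsMagnetization m) {β : ℝ} (hβ : 1 < β) :
    artanh (m β) / m β = β := by
  conv_lhs => arg 1; rw [(hm β hβ).2, artanh_tanh]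
  exact mul_div_cancel_right₀ β (hm β hβ).1.1.ne'

theorem strictMonoOn (hm : IsMagnetization m) : StrictMonoOn m (Ioi 1) :=
  fun β₁ hβ₁ β₂ hβ₂ h =>
    (strictMonoOn_artanh_div.lt_iff_lt (hm β₁ hβ₁).1 (hm β₂ hβ₂).1).1 <| by
      simpa only [hm.artanh_div_eq hβ₁, hm.artanh_div_eq hβ₂] using h

theorem apply_artanh_div (hm : IsMagnetization m) {x : ℝ} (hx : x ∈ Ioo 0 1) :
    m (artanh x / x) = x :=
  have hβ := one_lt_artanh_div hx
  strictMonoOn_artanh_div.injOn (hm _ hβ).1 hx (hm.artanh_div_eq hβ)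

theorem image_Ioi_one (hm : IsMagnetization m) : m '' Ioi 1 = Ioo 0 1 := by
  refine Subset.antisymm ?_ fun x hx => ?_
  · rintro _ ⟨β, hβ, rfl⟩
    exact (hm β hβ).1
  · exact ⟨artanh x / x, one_lt_artanh_div hx, hm.apply_artanh_div hx⟩

theorem continuousOn (hm : IsMagnetization m) : ContinuousOn m (Ioi 1) := fun β hβ =>
  (hm.strictMonoOn.continuousAt_of_image_mem_nhds (isOpen_Ioi.mem_nhds hβ) <| by
    rw [hm.image_Ioi_one]
    exact isOpen_Ioo.mem_nhds (hm β hβ).1).continuousWithinAt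

theorem tendsto_nhdsGT_one (hm : IsMagnetization m) : Tendsto m (𝓝[>] 1) (𝓝 0) := by
  have h := hm.strictMonoOn.monotoneOn.tendsto_nhdsGT
    (by rw [hm.image_Ioi_one]; exact bddBelow_Ioo)
  rwa [hm.image_Ioi_one, csInf_Ioo zero_lt_one] at h

theorem strictMonoOn_mul_sq (hm : IsMagnetization m) :
    StrictMonoOn (fun β => β * m β ^ 2) (Ioi 1) := fun β₁ hβ₁ β₂ hβ₂ h => by
  have hm₁ := (hm β₁ hβ₁).1.1
  have hm₁₂ := hm.strictMonoOn hβ₁ hβ₂ h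
  exact mul_lt_mul'' h (by gcongr) (by linarith [mem_Ioi.1 hβ₁]) (by positivity)

theorem continuousOn_mul_sq (hm : IsMagnetization m) :
    ContinuousOn (fun β => β * m β ^ 2) (Ioi 1) :=
  continuousOn_id.mul (hm.continuousOn.pow 2)

theorem tendsto_mul_sq_nhdsGT_one (hm : IsMagnetization m) :
    Tendsto (fun β => β * m β ^ 2) (𝓝[>] 1) (𝓝 0) := by
  simpa using (tendsto_nhdsWithin_of_tendsto_nhds tendsto_id).mul (hm.tendsto_nhdsGT_one.pow 2)

theorem tendsto_mul_sq_atTop (hm : IsMagnetization m) :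
    Tendsto (fun β => β * m β ^ 2) atTop atTop := by
  have hm₂ := (hm 2 one_lt_two).1.1
  refine tendsto_atTop_mono' atTop ?_ (tendsto_id.atTop_mul_const (pow_pos hm₂ 2))
  filter_upwards [eventually_ge_atTop 2] with β hβ
  have := hm.strictMonoOn.monotoneOn (mem_Ioi.2 one_lt_two)
    (mem_Ioi.2 (one_lt_two.trans_le hβ)) hβ
  dsimp only [id]
  gcongr

end IsMagnetization

/-- **Monotonicity of `β ↦ β mβ²`.** If `mB β` denotes, for `β > 1`, the unique positive
solution in `(0,1)` of `m = tanh (β m)`, then `β ↦ β * (mB β)^2` is continuous and strictly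
increasing on `(1,∞)`, tends to `0` as `β ↓ 1`, tends to `+∞` as `β → ∞`, and consequently
for every `b > 0` there is a unique `β ∈ (1,∞)` with `β * (mB β)^2 = b`. -/
theorem beta_m_sq_monotone
    (mB : ℝ → ℝ)
    (hmB : ∀ β : ℝ, 1 < β → mB β ∈ Set.Ioo (0 : ℝ) 1 ∧ mB β = Real.tanh (β * mB β)) :
    ContinuousOn (fun β : ℝ => β * (mB β) ^ 2) (Set.Ioi 1) ∧
    StrictMonoOn (fun β : ℝ => β * (mB β) ^ 2) (Set.Ioi 1) ∧
    Tendsto (fun β : ℝ => β * (mB β) ^ 2) (nhdsWithin 1 (Set.Ioi 1)) (nhds 0) ∧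
    Tendsto (fun β : ℝ => β * (mB β) ^ 2) atTop atTop ∧
    (∀ b : ℝ, 0 < b → ∃! β : ℝ, β ∈ Set.Ioi (1 : ℝ) ∧ β * (mB β) ^ 2 = b) := by
  have hm : IsMagnetization mB := hmB
  refine ⟨hm.continuousOn_mul_sq, hm.strictMonoOn_mul_sq, hm.tendsto_mul_sq_nhdsGT_one,
    hm.tendsto_mul_sq_atTop, fun b hb => ?_⟩
  obtain ⟨β, hβ, hβb⟩ := isPreconnected_Ioi.intermediate_value_Ioi (l₁ := 𝓝[>] 1)
    inf_le_right (le_principal_iff.2 (Ioi_mem_atTop 1)) hm.continuousOn_mul_sq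
    hm.tendsto_mul_sq_nhdsGT_one hm.tendsto_mul_sq_atTop hb
  exact ⟨β, ⟨hβ, hβb⟩, fun β' hβ' =>
    hm.strictMonoOn_mul_sq.injOn hβ'.1 hβ (hβ'.2.trans hβb.symm)⟩
end

section
/- For every β>1 there exists c_β>0 such that for all m∈[−1,1], f_β(m)−f_β(m_β) ≥ c_β·min{(m−m_β)², (m+m_β)²}. In particular, ±m_β are the unique global minimizers of f_β on [−1,1]. -/
/-! The derivative of `f_β` is `(artanh m - β m) / β`, and `u m = artanh m - β m` is strictly
convex on `[0, 1)` with zeros at `0` and `m_β`. Hence `u ≤ 0` on `[0, m_β]`, so `f_β` decreases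
there, and monotonicity of the secant slopes of `u` at `m_β` gives
`u m · (m - m_β) ≥ s (m - m_β)²` on `[m_β / 2, 1)` for some `s > 0`; integrating yields the
quadratic bound on `[m_β / 2, 1]`, and on `[0, m_β / 2]` the bound at `m_β / 2` takes over.
Evenness of `f_β` handles `[-1, 0]`. -/

/-- The entropy `S(m) = -((1+m)/2) ln((1+m)/2) - ((1-m)/2) ln((1-m)/2)`.
Since `Real.log 0 = 0` in Mathlib, this formula automatically extends continuously
by `S(±1) = 0`. -/
noncomputable def entropy (m : ℝ) : ℝ :=
  -((1 + m) / 2 * Real.log ((1 + m) / 2)) - (1 - m) / 2 * Real.log ((1 - m) / 2)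

/-- The mean-field free energy `f_β(m) = -m²/2 - S(m)/β`. -/
noncomputable def meanFieldFreeEnergy (β m : ℝ) : ℝ :=
  -m ^ 2 / 2 - entropy m / β

open Set Real

theorem Real.artanh_eq_half_log_sub {x : ℝ} (hx : x ∈ Ioo (-1) 1) :
    artanh x = (log (1 + x) - log (1 - x)) / 2 := by
  rw [artanh_eq_half_log (Ioo_subset_Icc_self hx),
    log_div (by linarith [hx.1]) (by linarith [hx.2])]
  ring

theorem Real.hasDerivAt_artanh {x : ℝ} (hx : x ∈ Ioo (-1) 1) :
    HasDerivAt artanh (1 - x ^ 2)⁻¹ x := by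
  have h₁ : 0 < 1 + x := by linarith [hx.1]
  have h₂ : 0 < 1 - x := by linarith [hx.2]
  have hlog : HasDerivAt (fun y => (log (1 + y) - log (1 - y)) / 2) (1 - x ^ 2)⁻¹ x := by
    refine ((((hasDerivAt_id' x).const_add 1).log h₁.ne').sub
      (((hasDerivAt_id' x).const_sub 1).log h₂.ne')).div_const 2 |>.congr_deriv ?_
    rw [show 1 - x ^ 2 = (1 + x) * (1 - x) by ring]
    field_simp
    ring
  exact hlog.congr_of_eventuallyEq <|
    Filter.eventually_of_mem (isOpen_Ioo.mem_nhds hx) fun y hy => artanh_eq_half_log_sub hy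

theorem Real.strictConvexOn_artanh : StrictConvexOn ℝ (Ico 0 1) artanh := by
  have hderiv : ∀ x ∈ Ico (0 : ℝ) 1, HasDerivAt artanh (1 - x ^ 2)⁻¹ x :=
    fun x hx => hasDerivAt_artanh ⟨by linarith [hx.1], hx.2⟩
  refine StrictMonoOn.strictConvexOn_of_deriv (convex_Ico 0 1)
    (fun x hx => (hderiv x hx).continuousAt.continuousWithinAt) ?_
  rw [interior_Ico]
  intro x hx y hy hxy
  rw [(hderiv x (Ioo_subset_Ico_self hx)).deriv, (hderiv y (Ioo_subset_Ico_self hy)).deriv]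
  gcongr
  · nlinarith [hy.2, hy.1]
  · exact hx.1.le

theorem hasDerivAt_entropy {m : ℝ} (hm : m ∈ Ioo (-1) 1) :
    HasDerivAt entropy (-artanh m) m := by
  have h₁ : 0 < 1 + m := by linarith [hm.1]
  have h₂ : 0 < 1 - m := by linarith [hm.2]
  have hp : HasDerivAt (fun y => (1 + y) / 2) (1 / 2) m :=
    ((hasDerivAt_id' m).const_add 1).div_const 2
  have hq : HasDerivAt (fun y => (1 - y) / 2) (-1 / 2) m :=
    ((hasDerivAt_id' m).const_sub 1).div_const 2
  have h := ((hasDerivAt_mul_log (by positivity)).comp m hp).neg.sub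
    ((hasDerivAt_mul_log (by positivity)).comp m hq)
  refine h.congr_deriv ?_
  rw [artanh_eq_half_log_sub hm, log_div h₁.ne' two_ne_zero, log_div h₂.ne' two_ne_zero]
  ring

@[fun_prop]
theorem continuous_entropy : Continuous entropy := by
  unfold entropy
  fun_prop

theorem entropy_neg (m : ℝ) : entropy (-m) = entropy m := by
  rw [entropy, entropy, ← sub_eq_add_neg, sub_neg_eq_add]
  ring

theorem meanFieldFreeEnergy_neg (β m : ℝ) :
    meanFieldFreeEnergy β (-m) = meanFieldFreeEnergy β m := by
  rw [meanFieldFreeEnergy, meanFieldFreeEnergy, entropy_neg, neg_sq]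

@[fun_prop]
theorem continuous_meanFieldFreeEnergy (β : ℝ) : Continuous (meanFieldFreeEnergy β) := by
  unfold meanFieldFreeEnergy
  fun_prop

theorem hasDerivAt_meanFieldFreeEnergy {β m : ℝ} (hβ : β ≠ 0) (hm : m ∈ Ioo (-1) 1) :
    HasDerivAt (meanFieldFreeEnergy β) ((artanh m - β * m) / β) m := by
  have h := ((hasDerivAt_pow 2 m).neg.div_const 2).sub ((hasDerivAt_entropy hm).div_const β)
  refine h.congr_deriv ?_
  field_simp
  ring

theorem isMinOn_Icc_of_hasDerivAt_of_mul_sub_nonneg {f f' : ℝ → ℝ} {a b c : ℝ}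
    (hc : c ∈ Icc a b) (hf : ContinuousOn f (Icc a b))
    (hf' : ∀ x ∈ Ioo a b, HasDerivAt f (f' x) x) (hsign : ∀ x ∈ Ioo a b, 0 ≤ f' x * (x - c)) :
    IsMinOn f (Icc a b) c := by
  intro x hx
  rcases le_total x c with hxc | hcx
  · refine antitoneOn_of_hasDerivWithinAt_nonpos (f' := f') (convex_Icc a c)
      (hf.mono (Icc_subset_Icc_right hc.2)) (fun y hy => ?_) (fun y hy => ?_)
      ⟨hx.1, hxc⟩ (right_mem_Icc.2 hc.1) hxc
    all_goals rw [interior_Icc] at hy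
    · exact (hf' y ⟨hy.1, hy.2.trans_le hc.2⟩).hasDerivWithinAt
    · exact nonpos_of_mul_nonneg_left (hsign y ⟨hy.1, hy.2.trans_le hc.2⟩) (sub_neg.2 hy.2)
  · refine monotoneOn_of_hasDerivWithinAt_nonneg (f' := f') (convex_Icc c b)
      (hf.mono (Icc_subset_Icc_left hc.1)) (fun y hy => ?_) (fun y hy => ?_)
      (left_mem_Icc.2 hc.2) ⟨hcx, hx.2⟩ hcx
    all_goals rw [interior_Icc] at hy
    · exact (hf' y ⟨hc.1.trans_lt hy.1, hy.2⟩).hasDerivWithinAt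
    · exact nonneg_of_mul_nonneg_left (hsign y ⟨hc.1.trans_lt hy.1, hy.2⟩) (sub_pos.2 hy.1)

theorem ConvexOn.slope_mul_sq_le {s : Set ℝ} {f : ℝ → ℝ} (hf : ConvexOn ℝ s f) {a b x : ℝ}
    (ha : a ∈ s) (hb : b ∈ s) (hx : x ∈ s) (hba : b < a) (hbx : b ≤ x) :
    (f b - f a) / (b - a) * (x - a) ^ 2 ≤ (f x - f a) * (x - a) := by
  rcases eq_or_ne x a with rfl | hxa
  · simp
  calc (f b - f a) / (b - a) * (x - a) ^ 2
      ≤ (f x - f a) / (x - a) * (x - a) ^ 2 := by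
        gcongr ?_ * _
        exact hf.secant_mono ha hb hx hba.ne hxa hbx
    _ = (f x - f a) * (x - a) := by
        field_simp [sub_ne_zero.2 hxa]

theorem strictConvexOn_artanh_sub_mul (β : ℝ) :
    StrictConvexOn ℝ (Ico 0 1) (fun x => artanh x - β * x) :=
  strictConvexOn_artanh.sub_concaveOn ((LinearMap.mulLeft ℝ β).concaveOn (convex_Ico 0 1))

section FixedPoint

variable {β mβ : ℝ}

theorem artanh_sub_mul_eq_zero_of_eq_tanh (hfix : mβ = tanh (β * mβ)) :
    artanh mβ - β * mβ = 0 := by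
  nth_rewrite 1 [hfix]
  rw [artanh_tanh, sub_self]

theorem artanh_sub_mul_nonpos (hmβ : mβ ∈ Ioo 0 1) (hfix : mβ = tanh (β * mβ))
    {x : ℝ} (hx : x ∈ Icc 0 mβ) : artanh x - β * x ≤ 0 := by
  have hu := (strictConvexOn_artanh_sub_mul β).convexOn.le_on_segment (x := 0) (y := mβ)
    (left_mem_Ico.2 one_pos) ⟨hmβ.1.le, hmβ.2⟩ (by rwa [segment_eq_Icc hmβ.1.le])
  rwa [artanh_sub_mul_eq_zero_of_eq_tanh hfix, artanh_zero, mul_zero, sub_zero, max_self] at hu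

theorem artanh_sub_mul_half_neg (hmβ : mβ ∈ Ioo 0 1) (hfix : mβ = tanh (β * mβ)) :
    artanh (mβ / 2) - β * (mβ / 2) < 0 := by
  have hu := (strictConvexOn_artanh_sub_mul β).lt_on_openSegment
    (x := 0) (y := mβ) (z := mβ / 2) (left_mem_Ico.2 one_pos) ⟨hmβ.1.le, hmβ.2⟩ hmβ.1.ne
    (by rw [openSegment_eq_Ioo hmβ.1]; constructor <;> linarith [hmβ.1])
  rwa [artanh_sub_mul_eq_zero_of_eq_tanh hfix, artanh_zero, mul_zero, sub_zero, max_self] at hu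

theorem antitoneOn_meanFieldFreeEnergy (hβ : 0 < β) (hmβ : mβ ∈ Ioo 0 1)
    (hfix : mβ = tanh (β * mβ)) : AntitoneOn (meanFieldFreeEnergy β) (Icc 0 mβ) := by
  refine antitoneOn_of_hasDerivWithinAt_nonpos (f' := fun x => (artanh x - β * x) / β)
    (convex_Icc 0 mβ) (continuous_meanFieldFreeEnergy β).continuousOn
    (fun x hx => ?_) (fun x hx => ?_)
  all_goals rw [interior_Icc] at hx
  · exact (hasDerivAt_meanFieldFreeEnergy hβ.ne'
      ⟨by linarith [hx.1], hx.2.trans hmβ.2⟩).hasDerivWithinAt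
  · exact div_nonpos_of_nonpos_of_nonneg
      (artanh_sub_mul_nonpos hmβ hfix (Ioo_subset_Icc_self hx)) hβ.le

theorem exists_pos_mul_sq_le_artanh_sub_mul (hmβ : mβ ∈ Ioo 0 1) (hfix : mβ = tanh (β * mβ)) :
    ∃ s > 0, ∀ x ∈ Ico (mβ / 2) 1, s * (x - mβ) ^ 2 ≤ (artanh x - β * x) * (x - mβ) := by
  have hu := artanh_sub_mul_eq_zero_of_eq_tanh hfix
  refine ⟨(artanh (mβ / 2) - β * (mβ / 2)) / (mβ / 2 - mβ),
    div_pos_of_neg_of_neg (artanh_sub_mul_half_neg hmβ hfix) (by linarith [hmβ.1]),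
    fun x hx => ?_⟩
  have h := (strictConvexOn_artanh_sub_mul β).convexOn.slope_mul_sq_le (a := mβ) (b := mβ / 2)
    ⟨hmβ.1.le, hmβ.2⟩ ⟨by linarith [hmβ.1], by linarith [hmβ.2]⟩
    ⟨by linarith [hmβ.1, hx.1], hx.2⟩ (by linarith [hmβ.1]) hx.1
  simpa only [hu, sub_zero] using h

theorem exists_mul_sq_le_meanFieldFreeEnergy_sub_of_half_le (hβ : 0 < β) (hmβ : mβ ∈ Ioo 0 1)
    (hfix : mβ = tanh (β * mβ)) :
    ∃ K > 0, ∀ m ∈ Icc (mβ / 2) 1,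
      K * (m - mβ) ^ 2 ≤ meanFieldFreeEnergy β m - meanFieldFreeEnergy β mβ := by
  obtain ⟨s, hs, hslope⟩ := exists_pos_mul_sq_le_artanh_sub_mul hmβ hfix
  refine ⟨s / (2 * β), by positivity, fun m hm => ?_⟩
  have hmin : IsMinOn (fun x => meanFieldFreeEnergy β x - s / (2 * β) * (x - mβ) ^ 2)
      (Icc (mβ / 2) 1) mβ := by
    refine isMinOn_Icc_of_hasDerivAt_of_mul_sub_nonneg
      (f' := fun x => (artanh x - β * x - s * (x - mβ)) / β)
      ⟨by linarith [hmβ.1], hmβ.2.le⟩ (by fun_prop) (fun x hx => ?_) (fun x hx => ?_)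
    · have hf := hasDerivAt_meanFieldFreeEnergy hβ.ne' ⟨by linarith [hmβ.1, hx.1], hx.2⟩
      refine (hf.sub (((hasDerivAt_id' x).sub_const mβ).pow 2 |>.const_mul _)).congr_deriv ?_
      field_simp
      ring
    · rw [div_mul_eq_mul_div]
      exact div_nonneg (by nlinarith [hslope x (Ioo_subset_Ico_self hx)]) hβ.le
  have := isMinOn_iff.1 hmin m hm
  simp only [sub_self, zero_pow two_ne_zero, mul_zero, sub_zero] at this
  linarith

theorem exists_mul_sq_le_meanFieldFreeEnergy_sub_of_nonneg (hβ : 0 < β) (hmβ : mβ ∈ Ioo 0 1)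
    (hfix : mβ = tanh (β * mβ)) :
    ∃ c > 0, ∀ m ∈ Icc 0 1,
      c * (m - mβ) ^ 2 ≤ meanFieldFreeEnergy β m - meanFieldFreeEnergy β mβ := by
  obtain ⟨K, hK, hnear⟩ := exists_mul_sq_le_meanFieldFreeEnergy_sub_of_half_le hβ hmβ hfix
  refine ⟨K / 4, by positivity, fun m hm => ?_⟩
  rcases le_total (mβ / 2) m with hm' | hm'
  · nlinarith [hnear m ⟨hm', hm.2⟩, sq_nonneg (m - mβ)]
  · have hdecr := antitoneOn_meanFieldFreeEnergy hβ hmβ hfix ⟨hm.1, by linarith [hmβ.1]⟩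
      ⟨by linarith [hmβ.1], by linarith [hmβ.1]⟩ hm'
    have hhalf := hnear (mβ / 2) ⟨le_rfl, by linarith [hmβ.2]⟩
    have hdist : (m - mβ) ^ 2 ≤ 4 * (mβ / 2 - mβ) ^ 2 := by nlinarith [hm.1]
    nlinarith

theorem exists_mul_min_sq_le_meanFieldFreeEnergy_sub (hβ : 0 < β) (hmβ : mβ ∈ Ioo 0 1)
    (hfix : mβ = tanh (β * mβ)) :
    ∃ c > 0, ∀ m ∈ Icc (-1) 1, c * min ((m - mβ) ^ 2) ((m + mβ) ^ 2) ≤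
      meanFieldFreeEnergy β m - meanFieldFreeEnergy β mβ := by
  obtain ⟨c, hc, hbound⟩ := exists_mul_sq_le_meanFieldFreeEnergy_sub_of_nonneg hβ hmβ hfix
  refine ⟨c, hc, fun m hm => ?_⟩
  rcases le_total 0 m with hm₀ | hm₀
  · exact (mul_le_mul_of_nonneg_left (min_le_left _ _) hc.le).trans (hbound m ⟨hm₀, hm.2⟩)
  · have h := hbound (-m) ⟨neg_nonneg.2 hm₀, by linarith [hm.1]⟩
    rw [meanFieldFreeEnergy_neg, show (-m - mβ) ^ 2 = (m + mβ) ^ 2 by ring] at h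
    exact (mul_le_mul_of_nonneg_left (min_le_right _ _) hc.le).trans h

end FixedPoint

/-- **Quadratic lower bound for the mean-field free energy.** For every `β > 1` there is
`c_β > 0` such that `f_β(m) - f_β(m_β) ≥ c_β · min{(m - m_β)², (m + m_β)²}` for all
`m ∈ [-1,1]`; in particular `±m_β` are the unique global minimizers of `f_β` on `[-1,1]`. -/
theorem meanFieldFreeEnergy_lower_bound
    (β mβ : ℝ) (hβ : 1 < β)
    (hmβ : mβ ∈ Set.Ioo (0 : ℝ) 1) (hfix : mβ = Real.tanh (β * mβ)) :
    (∃ c : ℝ, 0 < c ∧ ∀ m ∈ Set.Icc (-1 : ℝ) 1,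
      meanFieldFreeEnergy β m - meanFieldFreeEnergy β mβ ≥
        c * min ((m - mβ) ^ 2) ((m + mβ) ^ 2)) ∧
    (∀ m ∈ Set.Icc (-1 : ℝ) 1,
      meanFieldFreeEnergy β mβ ≤ meanFieldFreeEnergy β m ∧
      (meanFieldFreeEnergy β m = meanFieldFreeEnergy β mβ → m = mβ ∨ m = -mβ)) := by
  obtain ⟨c, hc, hbound⟩ :=
    exists_mul_min_sq_le_meanFieldFreeEnergy_sub (by linarith) hmβ hfix
  refine ⟨⟨c, hc, hbound⟩, fun m hm => ⟨?_, fun heq => ?_⟩⟩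
  · nlinarith [hbound m hm, le_min (sq_nonneg (m - mβ)) (sq_nonneg (m + mβ))]
  · have hmin : min ((m - mβ) ^ 2) ((m + mβ) ^ 2) ≤ 0 :=
      nonpos_of_mul_nonpos_right (by linarith [hbound m hm]) hc
    rcases min_le_iff.1 hmin with h | h
    · exact .inl (sub_eq_zero.1 ((sq_nonpos_iff _).1 h))
    · exact .inr (eq_neg_of_add_eq_zero_left ((sq_nonpos_iff _).1 h))
end
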